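/- arXiv:math/0508235 — 7 statements merged into one kernel-verified Lean document; each statement's English description precedes it below -/
import Mathlib

section
/- Let m, m' be reals with m > 1/2, m' > 1/2, and m + m' > 2. Then the double integral ∫_{ℝ³}∫_{ℝ³} (4π|x − y|)^{−2} ⟨x⟩^{−2m'} ⟨y⟩^{−2m} dx dy is finite. Consequently the integral operator with kernel G(x − y) = 1/(4π|x − y|) is Hilbert–Schmidt from L²_m(ℝ³) to L²_{−m'}(ℝ³). -/
open MeasureTheory
open scoped Real

noncomputable section

section JKAux

open Set Metric
open scoped ENNReal

/-- The function `‖x‖ ^ (-2)` is integrable on the unit ball in `ℝ³`. -/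
lemma jk_ball : IntegrableOn (fun x : EuclideanSpace ℝ (Fin 3) => ‖x‖ ^ (-2 : ℝ))
    (Metric.ball (0 : EuclideanSpace ℝ (Fin 3)) 1) volume := by
  set E := EuclideanSpace ℝ (Fin 3) with hE
  have h_meas : Measurable fun x : E => ‖x‖ ^ (-2:ℝ) := by fun_prop
  have h_nn : (0 : E → ℝ) ≤ fun x => ‖x‖ ^ (-2:ℝ) := fun x => Real.rpow_nonneg (norm_nonneg x) _
  set μ : Measure E := volume.restrict (Metric.ball 0 1) with hμ
  have hb : volume (Metric.ball (0:E) 1) < ∞ := measure_ball_lt_top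
  refine ⟨h_meas.aestronglyMeasurable, ?_⟩
  rw [HasFiniteIntegral, lintegral_enorm_of_nonneg h_nn,
    lintegral_eq_lintegral_meas_le μ (Filter.Eventually.of_forall h_nn) h_meas.aemeasurable]
  calc ∫⁻ t in Ioi (0:ℝ), μ {a : E | t ≤ ‖a‖ ^ (-2:ℝ)}
      ≤ ∫⁻ t in Ioc (0:ℝ) 1 ∪ Ioi 1, μ {a : E | t ≤ ‖a‖ ^ (-2:ℝ)} :=
        lintegral_mono_set Ioi_subset_Ioc_union_Ioi
    _ ≤ (∫⁻ t in Ioc (0:ℝ) 1, μ {a : E | t ≤ ‖a‖ ^ (-2:ℝ)}) +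
        ∫⁻ t in Ioi (1:ℝ), μ {a : E | t ≤ ‖a‖ ^ (-2:ℝ)} := lintegral_union_le _ _ _
    _ < ∞ := ENNReal.add_lt_top.2 ⟨?_, ?_⟩
  · calc (∫⁻ _t in Ioc (0:ℝ) 1, μ {a : E | _t ≤ ‖a‖ ^ (-2:ℝ)})
        ≤ ∫⁻ _t in Ioc (0:ℝ) 1, volume (Metric.ball (0:E) 1) := by
          refine setLIntegral_mono' measurableSet_Ioc fun t _ => ?_
          exact le_trans (measure_mono (Set.subset_univ _)) (by rw [Measure.restrict_apply_univ])
      _ = volume (Metric.ball (0:E) 1) * volume (Ioc (0:ℝ) 1) := setLIntegral_const _ _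
      _ < ∞ := ENNReal.mul_lt_top hb (by simp [Real.volume_Ioc])
  · have key : ∀ t ∈ Ioi (1:ℝ), μ {a : E | t ≤ ‖a‖ ^ (-2:ℝ)} ≤
        ENNReal.ofReal (t ^ (-(3:ℝ)/2)) * volume (Metric.ball (0:E) 1) := by
      intro t ht
      have ht1 : (1:ℝ) < t := ht
      have ht0 : (0:ℝ) < t := by linarith
      have hr0 : (0:ℝ) ≤ t ^ (-(1/2:ℝ)) := Real.rpow_nonneg ht0.le _
      have hsub : {a : E | t ≤ ‖a‖ ^ (-2:ℝ)} ⊆ Metric.closedBall 0 (t ^ (-(1/2:ℝ))) := by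
        intro a ha
        simp only [Set.mem_setOf_eq] at ha
        rcases eq_or_ne a 0 with rfl | h0
        · exfalso; rw [norm_zero, Real.zero_rpow (by norm_num)] at ha; linarith
        · have hna : 0 < ‖a‖ := norm_pos_iff.mpr h0
          have h2 := Real.rpow_le_rpow_of_nonpos ht0 ha (by norm_num : -(1/2:ℝ) ≤ 0)
          rw [← Real.rpow_mul hna.le] at h2
          norm_num at h2
          exact mem_closedBall_zero_iff.mpr h2
      have hcb : volume (Metric.closedBall (0:E) (t ^ (-(1/2:ℝ)))) =
          ENNReal.ofReal (t ^ (-(3:ℝ)/2)) * volume (Metric.ball (0:E) 1) := by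
        rw [Measure.addHaar_closedBall (μ := (volume : Measure E)) (0:E) hr0]
        congr 2
        rw [finrank_euclideanSpace_fin, ← Real.rpow_natCast (t ^ (-(1/2:ℝ))) 3,
          ← Real.rpow_mul ht0.le]
        norm_num
      calc μ {a : E | t ≤ ‖a‖ ^ (-2:ℝ)}
          ≤ volume {a : E | t ≤ ‖a‖ ^ (-2:ℝ)} := Measure.le_iff'.1 Measure.restrict_le_self _
        _ ≤ volume (Metric.closedBall (0:E) (t ^ (-(1/2:ℝ)))) := measure_mono hsub
        _ = _ := hcb
    calc ∫⁻ t in Ioi (1:ℝ), μ {a : E | t ≤ ‖a‖ ^ (-2:ℝ)}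
        ≤ ∫⁻ t in Ioi (1:ℝ), ENNReal.ofReal (t ^ (-(3:ℝ)/2)) * volume (Metric.ball (0:E) 1) :=
          setLIntegral_mono' measurableSet_Ioi key
      _ = (∫⁻ t in Ioi (1:ℝ), ENNReal.ofReal (t ^ (-(3:ℝ)/2))) * volume (Metric.ball (0:E) 1) :=
          lintegral_mul_const' _ _ hb.ne
      _ < ∞ := ENNReal.mul_lt_top
          ((integrableOn_Ioi_rpow_of_lt (by norm_num) one_pos).setLIntegral_lt_top) hb

/-- Japanese bracket weight `⟨y⟩^{-t}` is integrable on `ℝ³` for `t > 3`. -/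
lemma jk_g_integrable {t : ℝ} (ht : 3 < t) :
    Integrable (fun y : EuclideanSpace ℝ (Fin 3) => ((1:ℝ) + ‖y‖ ^ 2) ^ (-t/2)) volume := by
  refine integrable_rpow_neg_one_add_norm_sq ?_
  rw [finrank_euclideanSpace_fin]
  exact_mod_cast ht

/-- The kernel factor `‖z‖^{-2} ⟨z⟩^{-s}` is integrable on `ℝ³` for `s > 1`. -/
lemma jk_f_integrable {s : ℝ} (hs : 1 < s) :
    Integrable (fun z : EuclideanSpace ℝ (Fin 3) =>
      ‖z‖ ^ (-2:ℝ) * ((1:ℝ) + ‖z‖ ^ 2) ^ (-s/2)) volume := by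
  set E := EuclideanSpace ℝ (Fin 3) with hE
  have h_meas : Measurable fun z : E => ‖z‖ ^ (-2:ℝ) * ((1:ℝ) + ‖z‖ ^ 2) ^ (-s/2) := by fun_prop
  rw [← integrableOn_univ, ← Set.union_compl_self (Metric.ball (0:E) 1)]
  refine IntegrableOn.union ?_ ?_
  · -- on the ball, dominate by ‖z‖ ^ (-2)
    refine jk_ball.mono' h_meas.aestronglyMeasurable (Filter.Eventually.of_forall fun z => ?_)
    have h1 : (0:ℝ) ≤ ‖z‖ ^ (-2:ℝ) := Real.rpow_nonneg (norm_nonneg z) _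
    have h2 : ((1:ℝ) + ‖z‖ ^ 2) ^ (-s/2) ≤ 1 :=
      Real.rpow_le_one_of_one_le_of_nonpos (le_add_of_nonneg_right (by positivity)) (by linarith)
    have h3 : (0:ℝ) ≤ ((1:ℝ) + ‖z‖ ^ 2) ^ (-s/2) := Real.rpow_nonneg (by positivity) _
    rw [Real.norm_of_nonneg (by positivity)]
    calc ‖z‖ ^ (-2:ℝ) * ((1:ℝ) + ‖z‖ ^ 2) ^ (-s/2) ≤ ‖z‖ ^ (-2:ℝ) * 1 :=
          mul_le_mul_of_nonneg_left h2 h1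
      _ = ‖z‖ ^ (-2:ℝ) := mul_one _
  · -- off the ball, dominate by 2 * (1 + ‖z‖²) ^ (-(s+2)/2)
    have hint : Integrable (fun z : E => 2 * ((1:ℝ) + ‖z‖ ^ 2) ^ (-(s+2)/2)) volume := by
      refine (integrable_rpow_neg_one_add_norm_sq ?_).const_mul 2
      rw [finrank_euclideanSpace_fin]
      norm_num; linarith
    refine hint.integrableOn.mono' h_meas.aestronglyMeasurable ?_
    rw [ae_restrict_iff' measurableSet_ball.compl]
    refine Filter.Eventually.of_forall fun z hz => ?_
    have hz1 : (1:ℝ) ≤ ‖z‖ := by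
      simpa [Metric.mem_ball, not_lt] using hz
    have hz0 : (0:ℝ) < ‖z‖ := by linarith
    have hz2 : (1:ℝ) ≤ ‖z‖ ^ 2 := by nlinarith
    have hA : (0:ℝ) < 1 + ‖z‖ ^ 2 := by positivity
    rw [Real.norm_of_nonneg (by positivity)]
    have key : ‖z‖ ^ (-2:ℝ) ≤ 2 * ((1:ℝ) + ‖z‖ ^ 2)⁻¹ := by
      have e1 : ‖z‖ ^ (-2:ℝ) = (‖z‖ ^ 2)⁻¹ := by
        rw [show (-2:ℝ) = -((2:ℕ):ℝ) by norm_num, Real.rpow_neg (norm_nonneg z),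
          Real.rpow_natCast]
      rw [e1]
      have h4 : (1:ℝ) + ‖z‖ ^ 2 ≤ 2 * ‖z‖ ^ 2 := by nlinarith
      calc (‖z‖ ^ 2)⁻¹ ≤ (((1:ℝ) + ‖z‖ ^ 2) / 2)⁻¹ := by
            gcongr
            · linarith
        _ = 2 * ((1:ℝ) + ‖z‖ ^ 2)⁻¹ := by
            rw [inv_div, div_eq_mul_inv]
    calc ‖z‖ ^ (-2:ℝ) * ((1:ℝ) + ‖z‖ ^ 2) ^ (-s/2)
        ≤ (2 * ((1:ℝ) + ‖z‖ ^ 2)⁻¹) * ((1:ℝ) + ‖z‖ ^ 2) ^ (-s/2) :=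
          mul_le_mul_of_nonneg_right key (Real.rpow_nonneg hA.le _)
      _ = 2 * ((1:ℝ) + ‖z‖ ^ 2) ^ (-(s+2)/2) := by
          rw [← Real.rpow_neg_one ((1:ℝ) + ‖z‖ ^ 2), mul_assoc, ← Real.rpow_add hA]
          congr 2
          ring

/-- Core Peetre-type estimate on real numbers. -/
lemma jk_core {A B W s a b t : ℝ} (hs0 : 0 ≤ s) (hA : 1 ≤ A) (hB : 1 ≤ B) (hBA : B ≤ A)
    (hWA : W ≤ 4 * A) (hW : 0 < W) (hsa : s ≤ a) (ht : t = a + b - s) :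
    A ^ (-a/2) * B ^ (-b/2) ≤ 2 ^ s * (W ^ (-s/2) * B ^ (-t/2)) := by
  have hA0 : (0:ℝ) < A := by linarith
  have hB0 : (0:ℝ) < B := by linarith
  have h1 : A ^ (-a/2) = A ^ (-s/2) * A ^ (-(a-s)/2) := by
    rw [← Real.rpow_add hA0]; congr 1; ring
  have h2 : A ^ (-(a-s)/2) ≤ B ^ (-(a-s)/2) :=
    Real.rpow_le_rpow_of_nonpos hB0 hBA (by linarith)
  have h3 : A ^ (-s/2) ≤ 2 ^ s * W ^ (-s/2) := by
    have h4 : ((4:ℝ) * A) ^ (-s/2) ≤ W ^ (-s/2) :=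
      Real.rpow_le_rpow_of_nonpos hW hWA (by linarith)
    have h5 : ((4:ℝ) * A) ^ (-s/2) = 2 ^ (-s) * A ^ (-s/2) := by
      rw [Real.mul_rpow (by norm_num) hA0.le]
      congr 1
      have : (4:ℝ) = (2:ℝ) ^ (2:ℝ) := by
        rw [show ((2:ℝ) ^ (2:ℝ)) = (2:ℝ) ^ ((2:ℕ):ℝ) by norm_num, Real.rpow_natCast]; norm_num
      rw [this, ← Real.rpow_mul (by norm_num)]
      congr 1; ring
    have h7 : (2:ℝ) ^ s * ((2:ℝ) ^ (-s) * A ^ (-s/2)) = A ^ (-s/2) := by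
      rw [← mul_assoc, ← Real.rpow_add (by norm_num : (0:ℝ) < 2)]
      simp
    calc A ^ (-s/2) = 2 ^ s * (2 ^ (-s) * A ^ (-s/2)) := h7.symm
      _ = 2 ^ s * ((4 * A) ^ (-s/2)) := by rw [h5]
      _ ≤ 2 ^ s * W ^ (-s/2) :=
          mul_le_mul_of_nonneg_left h4 (Real.rpow_nonneg (by norm_num) _)
  calc A ^ (-a/2) * B ^ (-b/2) = A ^ (-s/2) * (A ^ (-(a-s)/2) * B ^ (-b/2)) := by
        rw [h1]; ring
    _ ≤ (2 ^ s * W ^ (-s/2)) * (B ^ (-(a-s)/2) * B ^ (-b/2)) := by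
        refine mul_le_mul h3 ?_ (by positivity) (by positivity)
        exact mul_le_mul_of_nonneg_right h2 (Real.rpow_nonneg hB0.le _)
    _ = 2 ^ s * (W ^ (-s/2) * B ^ (-t/2)) := by
        rw [← Real.rpow_add hB0, show -(a-s)/2 + -b/2 = -t/2 by rw [ht]; ring]
        ring

/-- Pointwise domination of the kernel by a sum of two convolution-type products. -/
lemma jk_key {a b s t : ℝ} (hs0 : 0 ≤ s) (hsa : s ≤ a) (hsb : s ≤ b) (ht : t = a + b - s)
    (x y : EuclideanSpace ℝ (Fin 3)) :
    ‖x - y‖ ^ (-2:ℝ) * ((1:ℝ) + ‖x‖ ^ 2) ^ (-a/2) * ((1:ℝ) + ‖y‖ ^ 2) ^ (-b/2) ≤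
      2 ^ s * (‖x - y‖ ^ (-2:ℝ) * ((1:ℝ) + ‖x - y‖ ^ 2) ^ (-s/2) * ((1:ℝ) + ‖y‖ ^ 2) ^ (-t/2)
        + ‖x - y‖ ^ (-2:ℝ) * ((1:ℝ) + ‖x - y‖ ^ 2) ^ (-s/2) * ((1:ℝ) + ‖x‖ ^ 2) ^ (-t/2)) := by
  have hn2 : (0:ℝ) ≤ ‖x - y‖ ^ (-2:ℝ) := Real.rpow_nonneg (norm_nonneg _) _
  have hAx : (1:ℝ) ≤ 1 + ‖x‖ ^ 2 := le_add_of_nonneg_right (by positivity)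
  have hAy : (1:ℝ) ≤ 1 + ‖y‖ ^ 2 := le_add_of_nonneg_right (by positivity)
  have hW : (0:ℝ) < 1 + ‖x - y‖ ^ 2 := by positivity
  rcases le_total ‖y‖ ‖x‖ with h | h
  · -- use the first summand
    have hBA : 1 + ‖y‖ ^ 2 ≤ 1 + ‖x‖ ^ 2 := by nlinarith [norm_nonneg x, norm_nonneg y]
    have hWA : 1 + ‖x - y‖ ^ 2 ≤ 4 * (1 + ‖x‖ ^ 2) := by
      have h1 : ‖x - y‖ ≤ 2 * ‖x‖ := (norm_sub_le x y).trans (by linarith)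
      nlinarith [norm_nonneg x, norm_nonneg y, norm_nonneg (x - y)]
    have hcore := jk_core hs0 hAx hAy hBA hWA hW hsa ht
    calc ‖x - y‖ ^ (-2:ℝ) * ((1:ℝ) + ‖x‖ ^ 2) ^ (-a/2) * ((1:ℝ) + ‖y‖ ^ 2) ^ (-b/2)
        = ‖x - y‖ ^ (-2:ℝ) * (((1:ℝ) + ‖x‖ ^ 2) ^ (-a/2) * ((1:ℝ) + ‖y‖ ^ 2) ^ (-b/2)) := by
          ring
      _ ≤ ‖x - y‖ ^ (-2:ℝ) *
          (2 ^ s * (((1:ℝ) + ‖x - y‖ ^ 2) ^ (-s/2) * ((1:ℝ) + ‖y‖ ^ 2) ^ (-t/2))) :=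
          mul_le_mul_of_nonneg_left hcore hn2
      _ = 2 ^ s * (‖x - y‖ ^ (-2:ℝ) * ((1:ℝ) + ‖x - y‖ ^ 2) ^ (-s/2) *
            ((1:ℝ) + ‖y‖ ^ 2) ^ (-t/2)) := by ring
      _ ≤ _ := by
          refine mul_le_mul_of_nonneg_left (le_add_of_nonneg_right ?_) (by positivity)
          positivity
  · -- use the second summand
    have hBA : 1 + ‖x‖ ^ 2 ≤ 1 + ‖y‖ ^ 2 := by nlinarith [norm_nonneg x, norm_nonneg y]
    have hWA : 1 + ‖x - y‖ ^ 2 ≤ 4 * (1 + ‖y‖ ^ 2) := by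
      have h1 : ‖x - y‖ ≤ 2 * ‖y‖ := (norm_sub_le x y).trans (by linarith)
      nlinarith [norm_nonneg x, norm_nonneg y, norm_nonneg (x - y)]
    have hcore := jk_core hs0 hAy hAx hBA hWA hW hsb (show t = b + a - s by rw [ht]; ring)
    calc ‖x - y‖ ^ (-2:ℝ) * ((1:ℝ) + ‖x‖ ^ 2) ^ (-a/2) * ((1:ℝ) + ‖y‖ ^ 2) ^ (-b/2)
        = ‖x - y‖ ^ (-2:ℝ) * (((1:ℝ) + ‖y‖ ^ 2) ^ (-b/2) * ((1:ℝ) + ‖x‖ ^ 2) ^ (-a/2)) := by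
          ring
      _ ≤ ‖x - y‖ ^ (-2:ℝ) *
          (2 ^ s * (((1:ℝ) + ‖x - y‖ ^ 2) ^ (-s/2) * ((1:ℝ) + ‖x‖ ^ 2) ^ (-t/2))) :=
          mul_le_mul_of_nonneg_left hcore hn2
      _ = 2 ^ s * (‖x - y‖ ^ (-2:ℝ) * ((1:ℝ) + ‖x - y‖ ^ 2) ^ (-s/2) *
            ((1:ℝ) + ‖x‖ ^ 2) ^ (-t/2)) := by ring
      _ ≤ _ := by
          refine mul_le_mul_of_nonneg_left (le_add_of_nonneg_left ?_) (by positivity)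
          positivity

lemma jk_prod1 {s t : ℝ} (hs : 1 < s) (ht : 3 < t) :
    Integrable (fun p : EuclideanSpace ℝ (Fin 3) × EuclideanSpace ℝ (Fin 3) =>
      ‖p.1 - p.2‖ ^ (-2:ℝ) * ((1:ℝ) + ‖p.1 - p.2‖ ^ 2) ^ (-s/2) *
        ((1:ℝ) + ‖p.2‖ ^ 2) ^ (-t/2)) volume := by
  set E := EuclideanSpace ℝ (Fin 3)
  have h := (jk_f_integrable hs).mul_prod (jk_g_integrable ht)
  rw [Measure.volume_eq_prod]
  have hmp := measurePreserving_sub_prod (volume : Measure E) volume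
  exact (hmp.integrable_comp h.aestronglyMeasurable).mpr h

lemma jk_prod2 {s t : ℝ} (hs : 1 < s) (ht : 3 < t) :
    Integrable (fun p : EuclideanSpace ℝ (Fin 3) × EuclideanSpace ℝ (Fin 3) =>
      ‖p.1 - p.2‖ ^ (-2:ℝ) * ((1:ℝ) + ‖p.1 - p.2‖ ^ 2) ^ (-s/2) *
        ((1:ℝ) + ‖p.1‖ ^ 2) ^ (-t/2)) volume := by
  set E := EuclideanSpace ℝ (Fin 3)
  have h1 := jk_prod1 hs ht
  rw [Measure.volume_eq_prod] at h1 ⊢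
  have h2 := (Measure.measurePreserving_swap (μ := (volume : Measure E))
    (ν := volume)).integrable_comp h1.aestronglyMeasurable |>.mpr h1
  have heq : (fun p : E × E =>
      ‖p.1 - p.2‖ ^ (-2:ℝ) * ((1:ℝ) + ‖p.1 - p.2‖ ^ 2) ^ (-s/2) *
        ((1:ℝ) + ‖p.1‖ ^ 2) ^ (-t/2)) =
      (fun p : E × E =>
      ‖p.1 - p.2‖ ^ (-2:ℝ) * ((1:ℝ) + ‖p.1 - p.2‖ ^ 2) ^ (-s/2) *
        ((1:ℝ) + ‖p.2‖ ^ 2) ^ (-t/2)) ∘ Prod.swap := by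
    funext p
    simp only [Function.comp_apply, Prod.fst_swap, Prod.snd_swap]
    rw [norm_sub_rev p.2 p.1]
  rw [heq]
  exact h2

end JKAux

/-- **Jensen–Kato Hilbert–Schmidt bound.**
For reals `m, m' > 1/2` with `m + m' > 2`, the double integral
`∫∫ (4π|x−y|)^{−2} ⟨x⟩^{−2m'} ⟨y⟩^{−2m} dx dy` over `ℝ³ × ℝ³` is finite, where
`⟨x⟩ = √(1+|x|²)`.  This is precisely the statement that the integral operator with
kernel `G(x−y) = 1/(4π|x−y|)` is Hilbert–Schmidt from `L²_m(ℝ³)` to `L²_{−m'}(ℝ³)`,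
since the square of its Hilbert–Schmidt norm equals this double integral. -/
theorem greens_kernel_hilbert_schmidt (m m' : ℝ)
    (hm : 1 / 2 < m) (hm' : 1 / 2 < m') (hsum : 2 < m + m') :
    Integrable
      (fun p : EuclideanSpace ℝ (Fin 3) × EuclideanSpace ℝ (Fin 3) =>
        (4 * π * ‖p.1 - p.2‖) ^ (-2 : ℝ) *
          Real.sqrt (1 + ‖p.1‖ ^ 2) ^ (-(2 * m')) *
          Real.sqrt (1 + ‖p.2‖ ^ 2) ^ (-(2 * m)))
      (volume : Measure (EuclideanSpace ℝ (Fin 3) × EuclideanSpace ℝ (Fin 3))) := by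
  set E := EuclideanSpace ℝ (Fin 3) with hE
  set s : ℝ := min (2 * m') (min (2 * m) ((2 * m' + 2 * m - 2) / 2)) with hs_def
  set t : ℝ := 2 * m' + 2 * m - s with ht_def
  have hs1 : 1 < s := by
    refine lt_min (by linarith) (lt_min (by linarith) (by linarith))
  have hs0 : (0:ℝ) ≤ s := by linarith
  have hsa : s ≤ 2 * m' := min_le_left _ _
  have hsb : s ≤ 2 * m := le_trans (min_le_right _ _) (min_le_left _ _)
  have hsc : s ≤ (2 * m' + 2 * m - 2) / 2 :=
    le_trans (min_le_right _ _) (min_le_right _ _)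
  have ht3 : 3 < t := by
    rw [ht_def]; linarith
  have hbound := ((jk_prod1 hs1 ht3).add (jk_prod2 hs1 ht3)).const_mul ((2:ℝ) ^ s)
  refine hbound.mono' ?_ ?_
  · refine Measurable.aestronglyMeasurable ?_
    fun_prop
  · refine Filter.Eventually.of_forall fun p => ?_
    have hπ : (0:ℝ) < π := Real.pi_pos
    have e1 : ∀ (v : E) (c : ℝ),
        Real.sqrt (1 + ‖v‖ ^ 2) ^ (-(2 * c)) = ((1:ℝ) + ‖v‖ ^ 2) ^ (-(2 * c)/2) := by
      intro v c
      have h0 : (0:ℝ) ≤ 1 + ‖v‖ ^ 2 := by positivity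
      rw [Real.sqrt_eq_rpow, ← Real.rpow_mul h0]
      congr 1; ring
    have e2 : (4 * π * ‖p.1 - p.2‖) ^ (-2:ℝ) ≤ ‖p.1 - p.2‖ ^ (-2:ℝ) := by
      rw [Real.mul_rpow (by positivity) (norm_nonneg _)]
      have h1 : ((4:ℝ) * π) ^ (-2:ℝ) ≤ 1 :=
        Real.rpow_le_one_of_one_le_of_nonpos (by nlinarith [Real.pi_gt_three]) (by norm_num)
      calc (4 * π) ^ (-2:ℝ) * ‖p.1 - p.2‖ ^ (-2:ℝ) ≤ 1 * ‖p.1 - p.2‖ ^ (-2:ℝ) :=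
            mul_le_mul_of_nonneg_right h1 (Real.rpow_nonneg (norm_nonneg _) _)
        _ = ‖p.1 - p.2‖ ^ (-2:ℝ) := one_mul _
    rw [Real.norm_of_nonneg (by positivity)]
    calc (4 * π * ‖p.1 - p.2‖) ^ (-2:ℝ) * Real.sqrt (1 + ‖p.1‖ ^ 2) ^ (-(2 * m')) *
          Real.sqrt (1 + ‖p.2‖ ^ 2) ^ (-(2 * m))
        = (4 * π * ‖p.1 - p.2‖) ^ (-2:ℝ) * ((1:ℝ) + ‖p.1‖ ^ 2) ^ (-(2 * m')/2) *
          ((1:ℝ) + ‖p.2‖ ^ 2) ^ (-(2 * m)/2) := by rw [e1, e1]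
      _ ≤ ‖p.1 - p.2‖ ^ (-2:ℝ) * ((1:ℝ) + ‖p.1‖ ^ 2) ^ (-(2 * m')/2) *
          ((1:ℝ) + ‖p.2‖ ^ 2) ^ (-(2 * m)/2) := by
          refine mul_le_mul_of_nonneg_right
            (mul_le_mul_of_nonneg_right e2 (Real.rpow_nonneg (by positivity) _))
            (Real.rpow_nonneg (by positivity) _)
      _ ≤ 2 ^ s * (‖p.1 - p.2‖ ^ (-2:ℝ) * ((1:ℝ) + ‖p.1 - p.2‖ ^ 2) ^ (-s/2) *
              ((1:ℝ) + ‖p.2‖ ^ 2) ^ (-t/2)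
            + ‖p.1 - p.2‖ ^ (-2:ℝ) * ((1:ℝ) + ‖p.1 - p.2‖ ^ 2) ^ (-s/2) *
              ((1:ℝ) + ‖p.1‖ ^ 2) ^ (-t/2)) :=
          jk_key hs0 hsa hsb (by rw [ht_def]) p.1 p.2

end
end

section
/- Let H be a complex Hilbert space, and let K and K̃ be bounded self-adjoint linear operators on H. Suppose K e = λ e with ‖e‖ = 1, K̃ ẽ = λ̃ ẽ with ‖ẽ‖ = 1, where λ, λ̃ ∈ ℝ, and suppose ⟨e, ẽ⟩ ≠ 0. Then |λ − λ̃| ≤ ‖(K − K̃) e‖ / |⟨e, ẽ⟩|. -/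
section

variable {𝕜 E : Type*} [RCLike 𝕜] [NormedAddCommGroup E] [InnerProductSpace 𝕜 E]

theorem LinearMap.IsSymmetric.inner_apply_eigenvector {T : E →ₗ[𝕜] E} (hT : T.IsSymmetric)
    {y : E} {μ : ℝ} (hy : T y = (μ : 𝕜) • y) (x : E) :
    inner 𝕜 (T x) y = (μ : 𝕜) * inner 𝕜 x y := by
  rw [hT, hy, inner_smul_right]

theorem inner_sub_apply_eigenvectors {A B : E →ₗ[𝕜] E} (hB : B.IsSymmetric) {x y : E}
    {lam μ : ℝ} (hx : A x = (lam : 𝕜) • x) (hy : B y = (μ : 𝕜) • y) :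
    inner 𝕜 ((A - B) x) y = ((lam - μ : ℝ) : 𝕜) * inner 𝕜 x y := by
  rw [LinearMap.sub_apply, inner_sub_left, hB.inner_apply_eigenvector hy, hx, inner_smul_left,
    RCLike.conj_ofReal, RCLike.ofReal_sub, sub_mul]

theorem abs_sub_eigenvalues_mul_norm_inner_le {A B : E →ₗ[𝕜] E} (hB : B.IsSymmetric)
    {x y : E} {lam μ : ℝ} (hx : A x = (lam : 𝕜) • x) (hy : B y = (μ : 𝕜) • y) :
    |lam - μ| * ‖inner 𝕜 x y‖ ≤ ‖(A - B) x‖ * ‖y‖ :=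
  calc |lam - μ| * ‖inner 𝕜 x y‖ = ‖inner 𝕜 ((A - B) x) y‖ := by
        rw [inner_sub_apply_eigenvectors hB hx hy, norm_mul, RCLike.norm_ofReal]
    _ ≤ ‖(A - B) x‖ * ‖y‖ := norm_inner_le_norm _ _

end

theorem eigenvalue_accuracy_simple_general
    {H : Type*} [NormedAddCommGroup H] [InnerProductSpace ℂ H] [CompleteSpace H]
    (K K' : H →L[ℂ] H) (hK' : IsSelfAdjoint K')
    (e e' : H) (he' : ‖e'‖ = 1) (lam lam' : ℝ)
    (hKe : K e = (lam : ℂ) • e) (hK'e' : K' e' = (lam' : ℂ) • e')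
    (hov : (inner ℂ e e' : ℂ) ≠ 0) :
    |lam - lam'| ≤ ‖(K - K') e‖ / ‖(inner ℂ e e' : ℂ)‖ := by
  have hbound := abs_sub_eigenvalues_mul_norm_inner_le (A := (K : H →ₗ[ℂ] H))
    hK'.isSymmetric hKe hK'e'
  rw [he', mul_one] at hbound
  rwa [le_div_iff₀ (norm_pos_iff.mpr hov)]

/-- **Gershgorin-type accuracy estimate for a simple eigenvalue.**
If `K e = λ e` and `K̃ ẽ = λ̃ ẽ` with unit vectors `e, ẽ` and self-adjoint bounded
operators `K, K̃` on a complex Hilbert space, and `⟨e, ẽ⟩ ≠ 0`, then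
`|λ − λ̃| ≤ ‖(K − K̃) e‖ / |⟨e, ẽ⟩|`. -/
theorem eigenvalue_accuracy_simple
    {H : Type*} [NormedAddCommGroup H] [InnerProductSpace ℂ H] [CompleteSpace H]
    (K K' : H →L[ℂ] H) (hK : IsSelfAdjoint K) (hK' : IsSelfAdjoint K')
    (e e' : H) (he : ‖e‖ = 1) (he' : ‖e'‖ = 1) (lam lam' : ℝ)
    (hKe : K e = (lam : ℂ) • e) (hK'e' : K' e' = (lam' : ℂ) • e')
    (hov : (inner ℂ e e' : ℂ) ≠ 0) :
    |lam - lam'| ≤ ‖(K - K') e‖ / ‖(inner ℂ e e' : ℂ)‖ :=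
  eigenvalue_accuracy_simple_general K K' hK' e e' he' lam lam' hKe hK'e' hov
end

section
/- Let H be a complex Hilbert space, and let K and K̃ be bounded self-adjoint linear operators on H. Let λ ∈ ℝ be an eigenvalue of K and let Π denote the orthogonal projection onto the eigenspace ker(K − λ). Suppose K̃ ẽ = λ̃ ẽ with ‖ẽ‖ = 1 and λ̃ ∈ ℝ, and suppose Π ẽ ≠ 0. Then |λ − λ̃| ≤ ‖(K − K̃) ẽ‖ / ‖Π ẽ‖. -/
/-! Write `p = P ẽ`. Since `ẽ - p` is orthogonal to the eigenspace, `⟪p, ẽ⟫ = ‖p‖²`; since `K` is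
self-adjoint with real eigenvalue `λ` on `p`, `⟪p, (K - K̃) ẽ⟫ = (λ - λ̃) ⟪p, ẽ⟫`. Cauchy–Schwarz
then gives `|λ - λ̃| ‖p‖² ≤ ‖p‖ ‖(K - K̃) ẽ‖`. -/

section

variable {𝕜 E : Type*} [RCLike 𝕜] [NormedAddCommGroup E] [InnerProductSpace 𝕜 E]

theorem inner_eq_norm_sq_of_inner_sub_self_eq_zero {x p : E} (h : inner 𝕜 (x - p) p = 0) :
    inner 𝕜 p x = (‖p‖ : 𝕜) ^ 2 := by
  rw [← inner_self_eq_norm_sq_to_K, ← sub_eq_zero, ← inner_sub_right, ← inner_conj_symm, h,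
    map_zero]

theorem inner_sub_apply_eq_of_eigenvectors {K K' : E →ₗ[𝕜] E} (hK : K.IsSymmetric)
    {lam lam' : ℝ} {p e : E} (hp : K p = (lam : 𝕜) • p) (he : K' e = (lam' : 𝕜) • e) :
    inner 𝕜 p (K e - K' e) = ((lam - lam' : ℝ) : 𝕜) * inner 𝕜 p e := by
  rw [inner_sub_right, ← hK, hp, he, inner_smul_left, inner_smul_right, RCLike.conj_ofReal,
    RCLike.ofReal_sub, sub_mul]

theorem abs_sub_mul_norm_le_of_eigenvectors {K K' : E →ₗ[𝕜] E} (hK : K.IsSymmetric)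
    {lam lam' : ℝ} {p e : E} (hp : K p = (lam : 𝕜) • p) (he : K' e = (lam' : 𝕜) • e)
    (hpe : inner 𝕜 p e = (‖p‖ : 𝕜) ^ 2) :
    |lam - lam'| * ‖p‖ ≤ ‖K e - K' e‖ := by
  rcases (norm_nonneg p).eq_or_lt with hp0 | hp0
  · rw [← hp0, mul_zero]
    exact norm_nonneg _
  refine le_of_mul_le_mul_left ?_ hp0
  calc ‖p‖ * (|lam - lam'| * ‖p‖) = ‖inner 𝕜 p (K e - K' e)‖ := by
        rw [inner_sub_apply_eq_of_eigenvectors hK hp he, hpe, norm_mul, norm_pow,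
          RCLike.norm_ofReal, RCLike.norm_ofReal, abs_norm]
        ring
    _ ≤ ‖p‖ * ‖K e - K' e‖ := norm_inner_le_norm p _

end

theorem eigenvalue_accuracy_multiple_general
    {H : Type*} [NormedAddCommGroup H] [InnerProductSpace ℂ H] [CompleteSpace H]
    (K K' : H →L[ℂ] H) (hK : IsSelfAdjoint K)
    (lam lam' : ℝ)
    (P : H →L[ℂ] H)
    (hPmem : ∀ x : H, K (P x) = (lam : ℂ) • P x)
    (hPorth : ∀ x y : H, K y = (lam : ℂ) • y → (inner ℂ (x - P x) y : ℂ) = 0)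
    (e' : H) (hK'e' : K' e' = (lam' : ℂ) • e')
    (hPe' : P e' ≠ 0) :
    |lam - lam'| ≤ ‖(K - K') e'‖ / ‖P e'‖ := by
  have hsymm := ContinuousLinearMap.isSelfAdjoint_iff_isSymmetric.mp hK
  have hproj := inner_eq_norm_sq_of_inner_sub_self_eq_zero (hPorth e' _ (hPmem e'))
  rw [le_div_iff₀ (norm_pos_iff.mpr hPe')]
  exact abs_sub_mul_norm_le_of_eigenvectors (K' := (K' : H →ₗ[ℂ] H)) hsymm (hPmem e') hK'e' hproj

/-- **Accuracy estimate for an eigenvalue of arbitrary multiplicity.**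
`K, K̃` are bounded self-adjoint operators on a complex Hilbert space, `λ` is an
eigenvalue of `K`, and `P` is the orthogonal projection onto the eigenspace
`ker (K − λ)` (characterized by: it maps into the eigenspace, fixes the eigenspace,
and `x − P x` is orthogonal to the eigenspace).  If `K̃ ẽ = λ̃ ẽ` with `‖ẽ‖ = 1` and
`P ẽ ≠ 0`, then `|λ − λ̃| ≤ ‖(K − K̃) ẽ‖ / ‖P ẽ‖`. -/
theorem eigenvalue_accuracy_multiple
    {H : Type*} [NormedAddCommGroup H] [InnerProductSpace ℂ H] [CompleteSpace H]
    (K K' : H →L[ℂ] H) (hK : IsSelfAdjoint K) (hK' : IsSelfAdjoint K')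
    (lam lam' : ℝ)
    (hlam : ∃ v : H, v ≠ 0 ∧ K v = (lam : ℂ) • v)
    (P : H →L[ℂ] H)
    (hPmem : ∀ x : H, K (P x) = (lam : ℂ) • P x)
    (hPfix : ∀ x : H, K x = (lam : ℂ) • x → P x = x)
    (hPorth : ∀ x y : H, K y = (lam : ℂ) • y → (inner ℂ (x - P x) y : ℂ) = 0)
    (e' : H) (he' : ‖e'‖ = 1) (hK'e' : K' e' = (lam' : ℂ) • e')
    (hPe' : P e' ≠ 0) :
    |lam - lam'| ≤ ‖(K - K') e'‖ / ‖P e'‖ :=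
  eigenvalue_accuracy_multiple_general K K' hK lam lam' P hPmem hPorth e' hK'e' hPe'
end

section
/- Let H be a complex Hilbert space and K a compact self-adjoint operator on H. Let λ ∈ ℝ be a simple eigenvalue of K (i.e., ker(K − λ) is one-dimensional) with unit eigenvector e. Let ẽ ∈ H with ‖ẽ‖ = 1 and ⟨e, ẽ⟩ ≥ 0, let λ̃ ∈ ℝ, and set r = K ẽ − λ̃ ẽ. Suppose d̃ := dist(λ̃, spec(K) \ {λ}) > 0. Then ‖e − ẽ‖ ≤ 2 ‖r‖ / d̃. -/
/-!
Write `ẽ = t e + w` with `w ⊥ e`. The residual `r` is `(K - λ̃) w` plus a multiple of `e`, so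
`‖(K - λ̃) w‖ ≤ ‖r‖`; and as `t = ⟨e, ẽ⟩ ≥ 0`, `‖e - ẽ‖² = 2 (1 - t) ≤ 4 (1 - t²) = 4 ‖w‖²`.
It remains to bound `d̃ ‖w‖ ≤ ‖(K - λ̃) w‖`. Take a continuous `g` with `|g| ≤ 1` that is `1` on
`spec K \ {λ}` and vanishes at the spectral points closer than `d̃` to `λ̃` (at most `λ` itself).
Since `(K - λ)(1 - g(K)) = 0` and `λ` is simple, `g(K)` fixes `e^⊥`; and `g(K) = f(K)(K - λ̃)`
with `‖f(K)‖ ≤ 1 / d̃`.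
-/

open scoped InnerProductSpace

/-- `x⁻¹` for `|x| ≥ d`, continued linearly by `x / d ^ 2` across `(-d, d)`. -/
noncomputable def clippedInv (d x : ℝ) : ℝ := x / max (x ^ 2) (d ^ 2)

theorem continuous_clippedInv {d : ℝ} (hd : 0 < d) : Continuous (clippedInv d) :=
  continuous_id.div (by fun_prop) fun x ↦ (lt_max_of_lt_right (by positivity)).ne'

theorem abs_clippedInv_le {d : ℝ} (hd : 0 < d) (x : ℝ) : |clippedInv d x| ≤ 1 / d := by
  have hM : 0 < max (x ^ 2) (d ^ 2) := lt_max_of_lt_right (by positivity)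
  rw [clippedInv, abs_div, abs_of_pos hM, div_le_div_iff₀ hM hd]
  nlinarith [sq_nonneg (|x| - d), le_max_left (x ^ 2) (d ^ 2), le_max_right (x ^ 2) (d ^ 2),
    sq_abs x, abs_nonneg x]

theorem clippedInv_mul_self {d : ℝ} (hd : 0 < d) {x : ℝ} (hx : d ≤ |x|) :
    clippedInv d x * x = 1 := by
  have hx0 : x ≠ 0 := abs_pos.mp (hd.trans_le hx)
  rw [clippedInv, max_eq_left (sq_le_sq.mpr (by rwa [abs_of_pos hd]))]
  field_simp

theorem abs_clippedInv_mul_self_le_one (d x : ℝ) : |clippedInv d x * x| ≤ 1 := by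
  have hM : 0 ≤ max (x ^ 2) (d ^ 2) := le_max_of_le_left (sq_nonneg x)
  rw [clippedInv, div_mul_eq_mul_div, ← sq, abs_of_nonneg (div_nonneg (sq_nonneg x) hM)]
  exact div_le_one_of_le₀ (le_max_left _ _) hM

theorem exists_continuous_cutoff {s : Set ℝ} {lam μ d : ℝ}
    (hgap : ∀ x ∈ s, x ≠ lam → d ≤ |x - μ|) :
    ∃ g : ℝ → ℝ, Continuous g ∧ (∀ x, |g x| ≤ 1) ∧ (∀ x ∈ s, x ≠ lam → g x = 1) ∧
      ∀ x ∈ s, g x ≠ 0 → d ≤ |x - μ| := by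
  rcases le_or_gt d |lam - μ| with hfar | hnear
  · refine ⟨fun _ ↦ 1, continuous_const, by simp, fun _ _ _ ↦ rfl, fun x hx _ ↦ ?_⟩
    rcases eq_or_ne x lam with rfl | hx'
    · exact hfar
    · exact hgap x hx hx'
  · set δ := d - |lam - μ|
    have hδ : 0 < δ := sub_pos.mpr hnear
    have hsep : ∀ x ∈ s, x ≠ lam → δ ≤ |x - lam| := fun x hx hx' ↦ by
      have := abs_sub_abs_le_abs_sub (x - μ) (lam - μ)
      simp only [sub_sub_sub_cancel_right] at this
      linarith [hgap x hx hx']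
    refine ⟨fun x ↦ clippedInv δ (x - lam) * (x - lam), ?_,
      fun x ↦ abs_clippedInv_mul_self_le_one δ _,
      fun x hx hx' ↦ clippedInv_mul_self hδ (hsep x hx hx'), fun x hx hgx ↦ ?_⟩
    · exact ((continuous_clippedInv hδ).comp (continuous_sub_right lam)).mul
        (continuous_sub_right lam)
    · have hx' : x ≠ lam := by rintro rfl; simp at hgx
      exact hgap x hx hx'

theorem norm_le_norm_add_of_inner_eq_zero {𝕜 E : Type*} [RCLike 𝕜] [NormedAddCommGroup E]
    [InnerProductSpace 𝕜 E] {x y : E} (h : ⟪x, y⟫_𝕜 = 0) : ‖x‖ ≤ ‖x + y‖ := by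
  refine (mul_self_le_mul_self_iff (norm_nonneg _) (norm_nonneg _)).mpr ?_
  rw [norm_add_sq_eq_norm_sq_add_norm_sq_of_inner_eq_zero x y h]
  exact le_add_of_nonneg_right (mul_self_nonneg _)

theorem norm_sub_le_two_mul_norm_sub_smul {𝕜 E : Type*} [RCLike 𝕜] [NormedAddCommGroup E]
    [InnerProductSpace 𝕜 E] {e e' : E} (he : ‖e‖ = 1) (he' : ‖e'‖ = 1) {t : ℝ} (ht : 0 ≤ t)
    (hinner : ⟪e, e'⟫_𝕜 = t) : ‖e - e'‖ ≤ 2 * ‖e' - (t : 𝕜) • e‖ := by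
  have ht1 : t ≤ 1 := by
    simpa [hinner, abs_of_nonneg ht, he, he'] using norm_inner_le_norm (𝕜 := 𝕜) e e'
  have hre : RCLike.re ⟪e', (t : 𝕜) • e⟫_𝕜 = t ^ 2 := by
    rw [inner_smul_right, ← inner_conj_symm, hinner]
    simp [sq]
  have hl : ‖e - e'‖ ^ 2 = 2 - 2 * t := by
    rw [@norm_sub_sq 𝕜, hinner, he, he', RCLike.ofReal_re]
    ring
  have hr : ‖e' - (t : 𝕜) • e‖ ^ 2 = 1 - t ^ 2 := by
    rw [@norm_sub_sq 𝕜, hre, norm_smul, he, he', RCLike.norm_ofReal, abs_of_nonneg ht]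
    ring
  refine (pow_le_pow_iff_left₀ (norm_nonneg _) (by positivity) two_ne_zero).mp ?_
  rw [mul_pow, hl, hr]
  nlinarith

theorem infDist_spectrum_diff_singleton_le {A : Type*} [Ring A] [Algebra ℂ A] [Algebra ℝ A]
    [IsScalarTower ℝ ℂ A] {a : A} {x : ℝ} (hx : x ∈ spectrum ℝ a) {lam : ℝ} (hxlam : x ≠ lam)
    (μ : ℝ) : Metric.infDist (μ : ℂ) (spectrum ℂ a \ {(lam : ℂ)}) ≤ |x - μ| := by
  have hmem : (x : ℂ) ∈ spectrum ℂ a \ {(lam : ℂ)} :=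
    ⟨by simpa using spectrum.algebraMap_mem ℂ hx, by simpa using hxlam⟩
  calc Metric.infDist (μ : ℂ) _ ≤ dist (μ : ℂ) x := Metric.infDist_le_dist_of_mem hmem
    _ = |x - μ| := by rw [Complex.dist_eq, ← Complex.ofReal_sub, Complex.norm_real,
      Real.norm_eq_abs, abs_sub_comm]

theorem LinearMap.IsSymmetric.apply_eq_self_of_inner_eq_zero {𝕜 E : Type*} [RCLike 𝕜]
    [NormedAddCommGroup E] [InnerProductSpace 𝕜 E] {Q : E →ₗ[𝕜] E} (hQ : Q.IsSymmetric)
    {e : E} (hrange : ∀ v, ∃ c : 𝕜, v - Q v = c • e) {w : E} (hw : ⟪e, w⟫_𝕜 = 0) :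
    Q w = w := by
  obtain ⟨a, ha⟩ := hrange e
  obtain ⟨b, hb⟩ := hrange w
  have hQe : Q e = (1 - a) • e := by rw [sub_smul, one_smul, ← ha, sub_sub_cancel]
  have hQw : ⟪e, Q w⟫_𝕜 = 0 := by rw [← hQ, hQe, inner_smul_left, hw, mul_zero]
  have hself : ⟪w - Q w, w - Q w⟫_𝕜 = 0 := by
    conv_lhs => arg 2; rw [hb]
    rw [inner_smul_left, inner_sub_right, hw, hQw, sub_zero, mul_zero]
  exact (sub_eq_zero.mp (inner_self_eq_zero.mp hself)).symm

section SelfAdjoint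

variable {H : Type*} [NormedAddCommGroup H] [InnerProductSpace ℂ H] [CompleteSpace H]
  {A : H →L[ℂ] H}

namespace IsSelfAdjoint

theorem cfc_sub_const_apply (hA : IsSelfAdjoint A) (μ : ℝ) (v : H) :
    cfc (fun x : ℝ ↦ x - μ) A v = A v - (μ : ℂ) • v := by
  rw [cfc_sub (fun x : ℝ ↦ x) (fun _ ↦ μ) A, cfc_id' ℝ A, cfc_const μ A]
  simp [Algebra.algebraMap_eq_smul_one, Complex.coe_smul]

theorem mul_norm_cfc_apply_le (hA : IsSelfAdjoint A) {g : ℝ → ℝ}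
    (hg : ContinuousOn g (spectrum ℝ A)) (hg_le : ∀ x ∈ spectrum ℝ A, |g x| ≤ 1) {μ d : ℝ}
    (hd : 0 < d) (hgap : ∀ x ∈ spectrum ℝ A, g x ≠ 0 → d ≤ |x - μ|) (v : H) :
    d * ‖cfc g A v‖ ≤ ‖A v - (μ : ℂ) • v‖ := by
  set f : ℝ → ℝ := fun x ↦ g x * clippedInv d (x - μ)
  have hf : ContinuousOn f (spectrum ℝ A) :=
    hg.mul ((continuous_clippedInv hd).comp (continuous_sub_right μ)).continuousOn
  have hfactor : cfc g A = cfc f A * cfc (fun x : ℝ ↦ x - μ) A := by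
    rw [← cfc_mul f _ A hf]
    refine cfc_congr fun x hx ↦ ?_
    by_cases hgx : g x = 0
    · simp [f, hgx]
    · simp only [f, mul_assoc, clippedInv_mul_self hd (hgap x hx hgx), mul_one]
  have hnorm : ‖cfc f A‖ ≤ 1 / d := norm_cfc_le (by positivity) fun x hx ↦ by
    rw [Real.norm_eq_abs, abs_mul, ← one_mul (1 / d)]
    exact mul_le_mul (hg_le x hx) (abs_clippedInv_le hd _) (abs_nonneg _) zero_le_one
  calc d * ‖cfc g A v‖ = d * ‖cfc f A (A v - (μ : ℂ) • v)‖ := by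
        rw [hfactor, mul_apply_eq_comp, hA.cfc_sub_const_apply]
    _ ≤ d * (1 / d * ‖A v - (μ : ℂ) • v‖) := by
        gcongr
        exact (cfc f A).le_of_opNorm_le hnorm _
    _ = ‖A v - (μ : ℂ) • v‖ := by field_simp

theorem apply_sub_cfc_apply_eq_smul (hA : IsSelfAdjoint A) {g : ℝ → ℝ}
    (hg : ContinuousOn g (spectrum ℝ A)) {lam : ℝ}
    (hg_one : ∀ x ∈ spectrum ℝ A, x ≠ lam → g x = 1)
    (v : H) : A (v - cfc g A v) = (lam : ℂ) • (v - cfc g A v) := by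
  have hzero : cfc (fun x : ℝ ↦ x - lam) A * cfc (fun x ↦ 1 - g x) A = 0 := by
    rw [← cfc_mul _ _ A, ← cfc_const_zero ℝ A]
    refine cfc_congr fun x hx ↦ ?_
    rcases eq_or_ne x lam with rfl | hx'
    · simp
    · simp [hg_one x hx hx']
  have hv : v - cfc g A v = cfc (fun x ↦ 1 - g x) A v := by
    rw [cfc_sub (fun _ ↦ (1 : ℝ)) g A, cfc_const_one ℝ A]
    rfl
  rw [← sub_eq_zero, ← hA.cfc_sub_const_apply, hv, ← mul_apply_eq_comp, hzero,
    zero_apply]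

theorem mul_norm_le_norm_sub_smul_of_inner_eq_zero (hA : IsSelfAdjoint A) {lam μ d : ℝ} {e : H}
    (hsimple : ∀ v : H, A v = (lam : ℂ) • v → ∃ c : ℂ, v = c • e) (hd : 0 < d)
    (hgap : ∀ x ∈ spectrum ℝ A, x ≠ lam → d ≤ |x - μ|) {w : H} (hw : ⟪e, w⟫_ℂ = 0) :
    d * ‖w‖ ≤ ‖A w - (μ : ℂ) • w‖ := by
  obtain ⟨g, hg, hg_le, hg_one, hg_gap⟩ := exists_continuous_cutoff hgap
  have hQw : cfc g A w = w :=
    (cfc_predicate g A).isSymmetric.apply_eq_self_of_inner_eq_zero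
      (fun v ↦ hsimple _ (hA.apply_sub_cfc_apply_eq_smul hg.continuousOn hg_one v)) hw
  simpa only [hQw] using hA.mul_norm_cfc_apply_le hg.continuousOn (fun x _ ↦ hg_le x) hd hg_gap w

end IsSelfAdjoint

end SelfAdjoint

theorem eigenvector_accuracy_simple_general
    {H : Type*} [NormedAddCommGroup H] [InnerProductSpace ℂ H] [CompleteSpace H]
    (K : H →L[ℂ] H) (hK : IsSelfAdjoint K)
    (lam : ℝ) (e : H) (he : ‖e‖ = 1) (hKe : K e = (lam : ℂ) • e)
    (hsimple : ∀ v : H, K v = (lam : ℂ) • v → ∃ c : ℂ, v = c • e)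
    (e' : H) (he' : ‖e'‖ = 1)
    (hphase : ∃ t : ℝ, 0 ≤ t ∧ (inner ℂ e e' : ℂ) = (t : ℂ))
    (lam' : ℝ) (r : H) (hr : r = K e' - (lam' : ℂ) • e')
    (hd : 0 < Metric.infDist (lam' : ℂ) (spectrum ℂ K \ {(lam : ℂ)})) :
    ‖e - e'‖ ≤ 2 * ‖r‖ / Metric.infDist (lam' : ℂ) (spectrum ℂ K \ {(lam : ℂ)}) := by
  set d := Metric.infDist (lam' : ℂ) (spectrum ℂ K \ {(lam : ℂ)})
  obtain ⟨t, ht, hinner⟩ := hphase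
  set w := e' - (t : ℂ) • e
  have hw : ⟪e, w⟫_ℂ = 0 := by
    rw [inner_sub_right, inner_smul_right, hinner, inner_self_eq_norm_sq_to_K, he]
    simp
  have hKw : ⟪e, K w - (lam' : ℂ) • w⟫_ℂ = 0 := by
    have hsymm : ⟪e, K w⟫_ℂ = ⟪K e, w⟫_ℂ := (hK.isSymmetric e w).symm
    rw [inner_sub_right, inner_smul_right, hsymm, hKe, inner_smul_left, hw]
    simp
  have hr_decomp : r = (K w - (lam' : ℂ) • w) + ((t : ℂ) * (lam - lam')) • e := by
    rw [hr]
    simp only [w, map_sub, map_smul, hKe]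
    module
  have hres : ‖K w - (lam' : ℂ) • w‖ ≤ ‖r‖ :=
    hr_decomp ▸ norm_le_norm_add_of_inner_eq_zero (by
      rw [inner_smul_right, ← inner_conj_symm, hKw, map_zero, mul_zero])
  have hgap : ∀ x ∈ spectrum ℝ K, x ≠ lam → d ≤ |x - lam'| :=
    fun x hx hxlam ↦ infDist_spectrum_diff_singleton_le hx hxlam lam'
  have hkey := hK.mul_norm_le_norm_sub_smul_of_inner_eq_zero hsimple hd hgap hw
  calc ‖e - e'‖ ≤ 2 * ‖w‖ := norm_sub_le_two_mul_norm_sub_smul he he' ht hinner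
    _ ≤ 2 * ‖r‖ / d := by
      rw [mul_div_assoc]
      gcongr
      rw [le_div_iff₀ hd]
      linarith

/-- **Eigenvector accuracy estimate for a simple eigenvalue of a compact self-adjoint
operator.**  Let `K` be compact self-adjoint on a complex Hilbert space, `λ ∈ ℝ` a
simple eigenvalue with unit eigenvector `e`.  Let `ẽ` be a unit vector with
`⟨e, ẽ⟩ ≥ 0` (a nonnegative real number), `λ̃ ∈ ℝ`, and `r = K ẽ − λ̃ ẽ`.  If
`d̃ = dist(λ̃, spec K \ {λ}) > 0`, then `‖e − ẽ‖ ≤ 2 ‖r‖ / d̃`. -/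
theorem eigenvector_accuracy_simple
    {H : Type*} [NormedAddCommGroup H] [InnerProductSpace ℂ H] [CompleteSpace H]
    (K : H →L[ℂ] H) (hK : IsSelfAdjoint K) (hKcomp : IsCompactOperator K)
    (lam : ℝ) (e : H) (he : ‖e‖ = 1) (hKe : K e = (lam : ℂ) • e)
    (hsimple : ∀ v : H, K v = (lam : ℂ) • v → ∃ c : ℂ, v = c • e)
    (e' : H) (he' : ‖e'‖ = 1)
    (hphase : ∃ t : ℝ, 0 ≤ t ∧ (inner ℂ e e' : ℂ) = (t : ℂ))
    (lam' : ℝ) (r : H) (hr : r = K e' - (lam' : ℂ) • e')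
    (hd : 0 < Metric.infDist (lam' : ℂ) (spectrum ℂ K \ {(lam : ℂ)})) :
    ‖e - e'‖ ≤ 2 * ‖r‖ / Metric.infDist (lam' : ℂ) (spectrum ℂ K \ {(lam : ℂ)}) :=
  eigenvector_accuracy_simple_general K hK lam e he hKe hsimple e' he' hphase lam' r hr hd
end

section
/- Let H be a complex Hilbert space, let A be a bounded self-adjoint linear operator on H that is bijective with bounded inverse, and let U be a bounded self-adjoint linear operator on H. Then the map f ↦ U f is a linear bijection from ker(A − U²) onto ker(I − U A^{−1} U), with inverse given by g ↦ A^{−1} U g. In particular ker(A − U²) ≠ {0} if and only if 1 is an eigenvalue of the operator K = U A^{−1} U, and the corresponding eigenspaces have equal dimension. -/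
/-!
If `A f = U (U f)` then `g = U f` satisfies `U (A⁻¹ (U g)) = U (A⁻¹ (A f)) = g`; conversely, if
`U (A⁻¹ (U g)) = g` then `f = A⁻¹ (U g)` satisfies `A f = U g = U (U f)`. The two maps are
mutually inverse on these kernels.
-/

namespace LinearMap

variable {R M : Type*} [Ring R] [AddCommGroup M] [Module R M] {A U B : M →ₗ[R] M}

theorem mem_ker_sub_comp_self_iff {f : M} : f ∈ ker (A - U ∘ₗ U) ↔ A f = U (U f) := by
  simp [sub_eq_zero]

theorem mem_ker_one_sub_comp_comp_iff {g : M} : g ∈ ker (1 - U ∘ₗ B ∘ₗ U) ↔ U (B (U g)) = g := by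
  rw [eq_comm]
  simp [sub_eq_zero]

theorem apply_apply_apply_eq_of_mem_ker_sub_comp_self (hBA : B ∘ₗ A = id) {f : M}
    (hf : f ∈ ker (A - U ∘ₗ U)) : B (U (U f)) = f := by
  rw [← mem_ker_sub_comp_self_iff.mp hf, ← comp_apply, hBA, id_apply]

theorem apply_mem_ker_one_sub_comp_comp (hBA : B ∘ₗ A = id) {f : M}
    (hf : f ∈ ker (A - U ∘ₗ U)) : U f ∈ ker (1 - U ∘ₗ B ∘ₗ U) :=
  mem_ker_one_sub_comp_comp_iff.mpr <|
    congrArg U (apply_apply_apply_eq_of_mem_ker_sub_comp_self hBA hf)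

theorem apply_apply_mem_ker_sub_comp_self (hAB : A ∘ₗ B = id) {g : M}
    (hg : g ∈ ker (1 - U ∘ₗ B ∘ₗ U)) : B (U g) ∈ ker (A - U ∘ₗ U) := by
  rw [mem_ker_sub_comp_self_iff, mem_ker_one_sub_comp_comp_iff.mp hg, ← comp_apply A, hAB, id_apply]

def birmanSchwingerEquiv (hAB : A ∘ₗ B = id) (hBA : B ∘ₗ A = id) :
    ker (A - U ∘ₗ U) ≃ₗ[R] ker (1 - U ∘ₗ B ∘ₗ U) :=
  LinearEquiv.ofLinearMap (U.restrict fun _ ↦ apply_mem_ker_one_sub_comp_comp hBA)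
    ((B ∘ₗ U).restrict fun _ ↦ apply_apply_mem_ker_sub_comp_self hAB)
    (ext fun g ↦ Subtype.ext (mem_ker_one_sub_comp_comp_iff.mp g.2))
    (ext fun f ↦ Subtype.ext (apply_apply_apply_eq_of_mem_ker_sub_comp_self hBA f.2))

theorem ker_sub_comp_self_ne_bot_iff (hAB : A ∘ₗ B = id) (hBA : B ∘ₗ A = id) :
    ker (A - U ∘ₗ U) ≠ ⊥ ↔ ker (1 - U ∘ₗ B ∘ₗ U) ≠ ⊥ := by
  rw [← Submodule.nontrivial_iff_ne_bot, ← Submodule.nontrivial_iff_ne_bot]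
  exact (birmanSchwingerEquiv hAB hBA).toEquiv.nontrivial_congr

end LinearMap

theorem birman_schwinger_correspondence_general
    {H : Type*} [NormedAddCommGroup H] [InnerProductSpace ℂ H]
    (A U Ainv : H →L[ℂ] H)
    (hA1 : A.comp Ainv = ContinuousLinearMap.id ℂ H)
    (hA2 : Ainv.comp A = ContinuousLinearMap.id ℂ H) :
    (∀ f ∈ LinearMap.ker ((A - U.comp U : H →L[ℂ] H) : H →ₗ[ℂ] H),
        U f ∈ LinearMap.ker (((1 : H →L[ℂ] H) - U.comp (Ainv.comp U) : H →L[ℂ] H) : H →ₗ[ℂ] H)) ∧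
    (∀ g ∈ LinearMap.ker (((1 : H →L[ℂ] H) - U.comp (Ainv.comp U) : H →L[ℂ] H) : H →ₗ[ℂ] H),
        Ainv (U g) ∈ LinearMap.ker ((A - U.comp U : H →L[ℂ] H) : H →ₗ[ℂ] H)) ∧
    (∀ f ∈ LinearMap.ker ((A - U.comp U : H →L[ℂ] H) : H →ₗ[ℂ] H), Ainv (U (U f)) = f) ∧
    (∀ g ∈ LinearMap.ker (((1 : H →L[ℂ] H) - U.comp (Ainv.comp U) : H →L[ℂ] H) : H →ₗ[ℂ] H),
        U (Ainv (U g)) = g) ∧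
    (LinearMap.ker ((A - U.comp U : H →L[ℂ] H) : H →ₗ[ℂ] H) ≠ ⊥ ↔
        LinearMap.ker (((1 : H →L[ℂ] H) - U.comp (Ainv.comp U) : H →L[ℂ] H) : H →ₗ[ℂ] H) ≠ ⊥) ∧
    (∃ eqv : LinearMap.ker ((A - U.comp U : H →L[ℂ] H) : H →ₗ[ℂ] H) ≃ₗ[ℂ]
        LinearMap.ker (((1 : H →L[ℂ] H) - U.comp (Ainv.comp U) : H →L[ℂ] H) : H →ₗ[ℂ] H),
      ∀ f : LinearMap.ker ((A - U.comp U : H →L[ℂ] H) : H →ₗ[ℂ] H), (eqv f : H) = U f) := by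
  have hAB : (A : H →ₗ[ℂ] H) ∘ₗ Ainv = LinearMap.id := congrArg ContinuousLinearMap.toLinearMap hA1
  have hBA : (Ainv : H →ₗ[ℂ] H) ∘ₗ A = LinearMap.id := congrArg ContinuousLinearMap.toLinearMap hA2
  exact ⟨fun _ ↦ LinearMap.apply_mem_ker_one_sub_comp_comp hBA,
    fun _ ↦ LinearMap.apply_apply_mem_ker_sub_comp_self hAB,
    fun _ ↦ LinearMap.apply_apply_apply_eq_of_mem_ker_sub_comp_self hBA,
    fun _ ↦ LinearMap.mem_ker_one_sub_comp_comp_iff.mp,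
    LinearMap.ker_sub_comp_self_ne_bot_iff hAB hBA,
    LinearMap.birmanSchwingerEquiv hAB hBA, fun _ ↦ rfl⟩

/-- **Abstract Birman–Schwinger correspondence.**
Let `A` be a bounded self-adjoint operator on a complex Hilbert space which is
bijective with bounded inverse `Ainv`, and let `U` be a bounded self-adjoint
operator.  Then `f ↦ U f` is a linear bijection from `ker (A − U²)` onto
`ker (I − U A⁻¹ U)` with inverse `g ↦ A⁻¹ (U g)`.  In particular
`ker (A − U²) ≠ ⊥` iff `1` is an eigenvalue of `K = U A⁻¹ U`, and the two
eigenspaces have equal dimension (they are linearly equivalent). -/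
theorem birman_schwinger_correspondence
    {H : Type*} [NormedAddCommGroup H] [InnerProductSpace ℂ H] [CompleteSpace H]
    (A U Ainv : H →L[ℂ] H) (hA : IsSelfAdjoint A) (hU : IsSelfAdjoint U)
    (hA1 : A.comp Ainv = ContinuousLinearMap.id ℂ H)
    (hA2 : Ainv.comp A = ContinuousLinearMap.id ℂ H) :
    (∀ f ∈ LinearMap.ker ((A - U.comp U : H →L[ℂ] H) : H →ₗ[ℂ] H),
        U f ∈ LinearMap.ker (((1 : H →L[ℂ] H) - U.comp (Ainv.comp U) : H →L[ℂ] H) : H →ₗ[ℂ] H)) ∧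
    (∀ g ∈ LinearMap.ker (((1 : H →L[ℂ] H) - U.comp (Ainv.comp U) : H →L[ℂ] H) : H →ₗ[ℂ] H),
        Ainv (U g) ∈ LinearMap.ker ((A - U.comp U : H →L[ℂ] H) : H →ₗ[ℂ] H)) ∧
    (∀ f ∈ LinearMap.ker ((A - U.comp U : H →L[ℂ] H) : H →ₗ[ℂ] H), Ainv (U (U f)) = f) ∧
    (∀ g ∈ LinearMap.ker (((1 : H →L[ℂ] H) - U.comp (Ainv.comp U) : H →L[ℂ] H) : H →ₗ[ℂ] H),
        U (Ainv (U g)) = g) ∧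
    (LinearMap.ker ((A - U.comp U : H →L[ℂ] H) : H →ₗ[ℂ] H) ≠ ⊥ ↔
        LinearMap.ker (((1 : H →L[ℂ] H) - U.comp (Ainv.comp U) : H →L[ℂ] H) : H →ₗ[ℂ] H) ≠ ⊥) ∧
    (∃ eqv : LinearMap.ker ((A - U.comp U : H →L[ℂ] H) : H →ₗ[ℂ] H) ≃ₗ[ℂ]
        LinearMap.ker (((1 : H →L[ℂ] H) - U.comp (Ainv.comp U) : H →L[ℂ] H) : H →ₗ[ℂ] H),
      ∀ f : LinearMap.ker ((A - U.comp U : H →L[ℂ] H) : H →ₗ[ℂ] H), (eqv f : H) = U f) :=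
  birman_schwinger_correspondence_general A U Ainv hA1 hA2
end

section
/- Let β > 0 and define φ: ℝ → ℝ by φ(x) = (β+1)^{1/(2β)} / (cosh(βx))^{1/β}. Then φ(x) > 0 for all x and φ satisfies −φ''(x) + φ(x) = φ(x)^{2β+1} for all x ∈ ℝ. -/
noncomputable section

/-- **The explicit one-dimensional ground state.**
For `β > 0`, the function `φ(x) = (β+1)^(1/(2β)) / cosh(βx)^(1/β)` is positive and
solves the soliton equation `−φ'' + φ = φ^(2β+1)` on `ℝ`. -/
theorem one_dimensional_soliton (β : ℝ) (hβ : 0 < β) (φ : ℝ → ℝ)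
    (hφ : ∀ x : ℝ, φ x = (β + 1) ^ (1 / (2 * β)) / Real.cosh (β * x) ^ (1 / β)) :
    (∀ x : ℝ, 0 < φ x) ∧
    (∀ x : ℝ, -(deriv (deriv φ) x) + φ x = φ x ^ (2 * β + 1)) := by
  have hβ1 : (0:ℝ) < β + 1 := by linarith
  have hβne : β ≠ 0 := hβ.ne'
  set C : ℝ := (β + 1) ^ (1 / (2 * β)) with hC
  have hCpos : 0 < C := Real.rpow_pos_of_pos hβ1 _
  set p : ℝ := -(1/β) with hp
  have hφ' : φ = fun x => C * Real.cosh (β * x) ^ p := by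
    funext x
    have hc : (0:ℝ) < Real.cosh (β * x) := Real.cosh_pos _
    rw [hφ, hp, Real.rpow_neg hc.le, div_eq_mul_inv]
  have hcpos : ∀ x : ℝ, (0:ℝ) < Real.cosh (β * x) := fun x => Real.cosh_pos _
  have hlin : ∀ x : ℝ, HasDerivAt (fun y : ℝ => β * y) β x := fun x => by
    simpa using (hasDerivAt_id x).const_mul β
  have hd1 : ∀ x : ℝ, HasDerivAt φ
      (-C * Real.sinh (β * x) * Real.cosh (β * x) ^ (p - 1)) x := by
    intro x
    have hcomp : HasDerivAt (fun y : ℝ => Real.cosh (β * y)) (Real.sinh (β * x) * β) x :=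
      (Real.hasDerivAt_cosh (β * x)).comp x (hlin x)
    have hrp : HasDerivAt (fun y : ℝ => Real.cosh (β * y) ^ p)
        (p * Real.cosh (β * x) ^ (p - 1) * (Real.sinh (β * x) * β)) x :=
      (Real.hasDerivAt_rpow_const (p := p) (Or.inl (hcpos x).ne')).comp (h := fun y : ℝ => Real.cosh (β * y)) x hcomp
    have h := hrp.const_mul C
    rw [hφ']
    convert h using 1
    · rfl
    · rfl
    rw [hp]
    field_simp
  have hderiv1 : deriv φ = fun x => -C * Real.sinh (β * x) * Real.cosh (β * x) ^ (p - 1) :=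
    funext fun x => (hd1 x).deriv
  have hd2 : ∀ x : ℝ, HasDerivAt (deriv φ)
      (-C * (Real.cosh (β * x) * β) * Real.cosh (β * x) ^ (p - 1)
        + -C * Real.sinh (β * x) *
          ((p - 1) * Real.cosh (β * x) ^ (p - 2) * (Real.sinh (β * x) * β))) x := by
    intro x
    rw [hderiv1]
    have hcomp : HasDerivAt (fun y : ℝ => Real.cosh (β * y)) (Real.sinh (β * x) * β) x :=
      (Real.hasDerivAt_cosh (β * x)).comp x (hlin x)
    have hs : HasDerivAt (fun y : ℝ => -C * Real.sinh (β * y))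
        (-C * (Real.cosh (β * x) * β)) x := by
      have h := ((Real.hasDerivAt_sinh (β * x)).comp x (hlin x)).const_mul (-C)
      simpa [mul_assoc] using h
    have hrp : HasDerivAt (fun y : ℝ => Real.cosh (β * y) ^ (p - 1))
        ((p - 1) * Real.cosh (β * x) ^ (p - 1 - 1) * (Real.sinh (β * x) * β)) x :=
      (Real.hasDerivAt_rpow_const (p := p - 1) (Or.inl (hcpos x).ne')).comp (h := fun y : ℝ => Real.cosh (β * y)) x hcomp
    have h := hs.mul hrp
    have h12 : p - 1 - 1 = p - 2 := by ring
    rw [h12] at h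
    exact h
  refine ⟨fun x => ?_, fun x => ?_⟩
  · rw [hφ]
    exact div_pos (Real.rpow_pos_of_pos hβ1 _) (Real.rpow_pos_of_pos (hcpos x) _)
  · have hderiv2 : deriv (deriv φ) x =
        -C * (Real.cosh (β * x) * β) * Real.cosh (β * x) ^ (p - 1)
        + -C * Real.sinh (β * x) *
          ((p - 1) * Real.cosh (β * x) ^ (p - 2) * (Real.sinh (β * x) * β)) := (hd2 x).deriv
    set c : ℝ := Real.cosh (β * x) with hc
    set s : ℝ := Real.sinh (β * x) with hs
    have hc0 : (0:ℝ) < c := hcpos x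
    have hsq' : s * s = c * c - 1 := by
      have h := Real.cosh_sq (β * x)
      rw [← hc, ← hs] at h
      nlinarith [h]
    have e1 : c ^ (p - 1) = c ^ p / c := by
      rw [Real.rpow_sub hc0, Real.rpow_one]
    have e2 : c ^ (p - 2) = c ^ p / c ^ 2 := by
      rw [Real.rpow_sub hc0, show (2:ℝ) = ((2:ℕ):ℝ) by norm_num, Real.rpow_natCast]
    have hrhs : φ x ^ (2 * β + 1) = (β + 1) * C * c ^ (p - 2) := by
      rw [hφ', hC]
      simp only
      rw [← hc,
        Real.mul_rpow (Real.rpow_pos_of_pos hβ1 _).le (Real.rpow_pos_of_pos hc0 _).le,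
        ← Real.rpow_mul hβ1.le, ← Real.rpow_mul hc0.le]
      have h1 : 1 / (2 * β) * (2 * β + 1) = 1 + 1 / (2 * β) := by field_simp
      have h2 : p * (2 * β + 1) = p - 2 := by rw [hp]; field_simp; ring_nf
      rw [h1, h2, Real.rpow_add hβ1, Real.rpow_one]
    have hφx : φ x = C * c ^ p := by rw [hφ']
    rw [hderiv2, hrhs, hφx, e1, e2]
    have hq0 : (0:ℝ) < c ^ p := Real.rpow_pos_of_pos hc0 _
    generalize c ^ p = q at *
    have hpv : p * β = -1 := by rw [hp]; field_simp
    field_simp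
    linear_combination (-s^2) * (mul_inv_cancel₀ hβne) - (1+β) * hsq'
end
end

section
/- For every x ≥ 0, the sine integral Si(x) = ∫₀ˣ (sin t)/t dt satisfies 0 ≤ Si(x) < 2. -/
noncomputable section

open Real intervalIntegral MeasureTheory

lemma mono_aux' {f f' : ℝ → ℝ} (hd : ∀ s, HasDerivAt f (f' s) s)
    (h0 : ∀ s, 0 ≤ s → 0 ≤ f' s) {t : ℝ} (ht : 0 ≤ t) : f 0 ≤ f t := by
  have H : MonotoneOn f (Set.Ici 0) := by
    apply monotoneOn_of_hasDerivWithinAt_nonneg (convex_Ici 0) (f' := f')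
      (fun s _ => (hd s).continuousAt.continuousWithinAt)
      (fun s hs => (hd s).hasDerivWithinAt)
    intro s hs
    rw [interior_Ici] at hs
    exact h0 s hs.le
  exact H Set.self_mem_Ici ht ht

lemma sin_ge_cubic' {t : ℝ} (ht : 0 ≤ t) : t - t^3/6 ≤ Real.sin t := by
  have := mono_aux' (f := fun t => Real.sin t - (t - t^3/6))
    (f' := fun s => Real.cos s - (1 - s^2/2)) (fun s => by
      have h1 := (Real.hasDerivAt_sin s)
      have h2 : HasDerivAt (fun t : ℝ => t - t^3/6) (1 - s^2/2) s := by
        have := ((hasDerivAt_pow 3 s).div_const 6)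
        have := (hasDerivAt_id s).sub this
        refine this.congr_deriv ?_; norm_num; ring
      exact h1.sub h2)
    (fun s hs => by nlinarith [Real.one_sub_sq_div_two_le_cos (x := s)]) ht
  simp at this; linarith

lemma cos_le_quartic_aux' {t : ℝ} (ht : 0 ≤ t) : Real.cos t ≤ 1 - t^2/2 + t^4/24 := by
  have := mono_aux' (f := fun t => (1 - t^2/2 + t^4/24) - Real.cos t)
    (f' := fun s => Real.sin s - (s - s^3/6)) (fun s => by
      have h1 : HasDerivAt (fun t : ℝ => 1 - t^2/2 + t^4/24) (-s + s^3/6) s := by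
        have h2 := ((hasDerivAt_pow 2 s).div_const 2)
        have h4 := ((hasDerivAt_pow 4 s).div_const 24)
        have := ((hasDerivAt_const s (1:ℝ)).sub h2).add h4
        refine this.congr_deriv ?_; norm_num; ring
      have := h1.sub (Real.hasDerivAt_cos s)
      refine this.congr_deriv ?_; ring)
    (fun s hs => by have := sin_ge_cubic' hs; linarith) ht
  simp at this; linarith

lemma cos_le_quartic' (t : ℝ) : Real.cos t ≤ 1 - t^2/2 + t^4/24 := by
  rcases le_total 0 t with ht | ht
  · exact cos_le_quartic_aux' ht
  · have := cos_le_quartic_aux' (t := -t) (by linarith)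
    rw [Real.cos_neg] at this
    calc Real.cos t ≤ 1 - (-t)^2/2 + (-t)^4/24 := this
    _ = 1 - t^2/2 + t^4/24 := by ring

lemma sin_le_quintic' {t : ℝ} (ht : 0 ≤ t) : Real.sin t ≤ t - t^3/6 + t^5/120 := by
  have := mono_aux' (f := fun t => (t - t^3/6 + t^5/120) - Real.sin t)
    (f' := fun s => (1 - s^2/2 + s^4/24) - Real.cos s) (fun s => by
      have h1 : HasDerivAt (fun t : ℝ => t - t^3/6 + t^5/120) (1 - s^2/2 + s^4/24) s := by
        have h3 := ((hasDerivAt_pow 3 s).div_const 6)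
        have h5 := ((hasDerivAt_pow 5 s).div_const 120)
        have := ((hasDerivAt_id s).sub h3).add h5
        refine this.congr_deriv ?_; norm_num; ring
      exact h1.sub (Real.hasDerivAt_sin s))
    (fun s hs => by have := cos_le_quartic' s; linarith) ht
  simp at this; linarith

lemma si_integrable' (a b : ℝ) : IntervalIntegrable (fun t => Real.sin t / t) volume a b := by
  constructor <;>
  · apply Measure.integrableOn_of_bounded (M := 1) (by simp)
    · exact (Real.measurable_sin.div measurable_id).aestronglyMeasurable
    · apply ae_of_all
      intro t
      rcases eq_or_ne t 0 with rfl | ht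
      · simp
      · rw [Real.norm_eq_abs, abs_div, div_le_one (abs_pos.mpr ht)]
        exact Real.abs_sin_le_abs

lemma sin_nonpos_on_pi_two_pi {t : ℝ} (h1 : π ≤ t) (h2 : t ≤ 2 * π) : Real.sin t ≤ 0 := by
  have h := Real.sin_sub_pi t
  have : 0 ≤ Real.sin (t - π) :=
    Real.sin_nonneg_of_nonneg_of_le_pi (by linarith) (by linarith)
  linarith [h ▸ this]

/-- The sine integral `Si(x) = ∫₀ˣ (sin t)/t dt`. -/
def Si (x : ℝ) : ℝ := ∫ t in (0:ℝ)..x, Real.sin t / t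

lemma Si_pi_le' : Si π ≤ π - π^3/18 + π^5/600 := by
  have hcalc : (∫ t in (0:ℝ)..π, (1 - t^2/6 + t^4/120))
      = π - π^3/18 + π^5/600 := by
    have hd : ∀ t ∈ Set.uIcc (0:ℝ) π, HasDerivAt (fun t : ℝ => t - t^3/18 + t^5/600)
        (1 - t^2/6 + t^4/120) t := by
      intro t _
      have h3 := ((hasDerivAt_pow 3 t).div_const 18)
      have h5 := ((hasDerivAt_pow 5 t).div_const 600)
      have := ((hasDerivAt_id t).sub h3).add h5
      refine this.congr_deriv ?_; norm_num; ring
    rw [integral_eq_sub_of_hasDerivAt hd (by apply Continuous.intervalIntegrable; fun_prop)]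
    norm_num
  rw [Si, ← hcalc]
  apply integral_mono_on pi_pos.le (si_integrable' 0 π)
    (by apply Continuous.intervalIntegrable; fun_prop)
  intro t ht
  rcases eq_or_lt_of_le ht.1 with rfl | htpos
  · norm_num
  · rw [div_le_iff₀ htpos]
    have h := sin_le_quintic' ht.1
    nlinarith


lemma Si_pi_ge' : π - π^3/18 ≤ Si π := by
  have hcalc : (∫ t in (0:ℝ)..π, (1 - t^2/6)) = π - π^3/18 := by
    have hd : ∀ t ∈ Set.uIcc (0:ℝ) π, HasDerivAt (fun t : ℝ => t - t^3/18)
        (1 - t^2/6) t := by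
      intro t _
      have h3 := ((hasDerivAt_pow 3 t).div_const 18)
      have := (hasDerivAt_id t).sub h3
      refine this.congr_deriv ?_; norm_num; ring
    rw [integral_eq_sub_of_hasDerivAt hd (by apply Continuous.intervalIntegrable; fun_prop)]
    norm_num
  rw [Si, ← hcalc]
  have h0 : ∀ᵐ (t : ℝ) ∂volume, t ≠ 0 := by
    rw [ae_iff]
    have : {a : ℝ | ¬a ≠ 0} = {0} := by ext; simp
    rw [this]; exact Real.volume_singleton
  apply integral_mono_ae_restrict pi_pos.le
    (by apply Continuous.intervalIntegrable; fun_prop) (si_integrable' 0 π)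
  filter_upwards [ae_restrict_mem measurableSet_Icc, ae_restrict_of_ae h0] with t htm htne
  have htpos : 0 < t := lt_of_le_of_ne htm.1 (Ne.symm htne)
  rw [le_div_iff₀ htpos]
  have h := sin_ge_cubic' htm.1
  nlinarith

lemma seg_le' : (∫ t in π..(2*π), Real.sin t / t) ≤ -(1/π) := by
  have hcalc : (∫ t in π..(2*π), Real.sin t / (2*π)) = -(1/π) := by
    rw [intervalIntegral.integral_div, integral_sin, Real.cos_pi, Real.cos_two_pi]
    field_simp
    ring
  rw [← hcalc]
  apply integral_mono_on (by linarith [pi_pos]) (si_integrable' π (2*π))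
    (intervalIntegrable_sin.div_const _)
  intro t ht
  have hs := sin_nonpos_on_pi_two_pi ht.1 ht.2
  have htpos : 0 < t := lt_of_lt_of_le pi_pos ht.1
  rw [div_le_div_iff₀ htpos (by linarith [pi_pos])]
  nlinarith [mul_nonneg (neg_nonneg.mpr hs) (sub_nonneg.mpr ht.2)]

lemma seg_ge' : -(2/π) ≤ (∫ t in π..(2*π), Real.sin t / t) := by
  have hcalc : (∫ t in π..(2*π), Real.sin t / π) = -(2/π) := by
    rw [intervalIntegral.integral_div, integral_sin, Real.cos_pi, Real.cos_two_pi]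
    field_simp
    norm_num
  rw [← hcalc]
  apply integral_mono_on (by linarith [pi_pos]) (intervalIntegrable_sin.div_const _)
    (si_integrable' π (2*π))
  intro t ht
  have hs := sin_nonpos_on_pi_two_pi ht.1 ht.2
  have htpos : 0 < t := lt_of_lt_of_le pi_pos ht.1
  rw [div_le_div_iff₀ pi_pos htpos]
  nlinarith [mul_nonneg (neg_nonneg.mpr hs) (sub_nonneg.mpr ht.1)]

lemma Si_add' (a x : ℝ) : Si x = Si a + ∫ t in a..x, Real.sin t / t := by
  rw [Si, Si, intervalIntegral.integral_add_adjacent_intervals (si_integrable' 0 a)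
    (si_integrable' a x)]

lemma tail_bound' {x : ℝ} (hx : 2*π ≤ x) : |Si x - Si (2*π)| ≤ 1/π := by
  have h2pi : (0:ℝ) < 2*π := by linarith [pi_pos]
  have hsub : ∀ t ∈ Set.uIcc (2*π) x, (0:ℝ) < t := by
    intro t ht
    rw [Set.uIcc_of_le hx] at ht
    linarith [ht.1]
  have hcont1 : ContinuousOn (fun t => Real.cos t / t^2) (Set.uIcc (2*π) x) := by
    apply ContinuousOn.div (Real.continuous_cos.continuousOn) (by fun_prop)
    intro t ht; exact pow_ne_zero 2 (hsub t ht).ne'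
  have hint1 : IntervalIntegrable (fun t => Real.cos t / t^2) volume (2*π) x :=
    hcont1.intervalIntegrable
  have hint2 : IntervalIntegrable (fun t => Real.sin t / t + Real.cos t / t^2)
      volume (2*π) x := by
    exact (si_integrable' _ _).add hint1
  have hd : ∀ t ∈ Set.uIcc (2*π) x, HasDerivAt (fun t : ℝ => -Real.cos t / t)
      (Real.sin t / t + Real.cos t / t^2) t := by
    intro t ht
    have htpos := hsub t ht
    have h := ((Real.hasDerivAt_cos t).neg).div (hasDerivAt_id t) htpos.ne'
    refine h.congr_deriv ?_
    simp only [id, Pi.neg_apply]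
    field_simp
    ring
  have key : (∫ t in (2*π)..x, (Real.sin t / t + Real.cos t / t^2))
      = -Real.cos x / x - (-Real.cos (2*π) / (2*π)) :=
    integral_eq_sub_of_hasDerivAt hd hint2
  have hsplit : (∫ t in (2*π)..x, (Real.sin t / t + Real.cos t / t^2))
      = (∫ t in (2*π)..x, Real.sin t / t) + ∫ t in (2*π)..x, Real.cos t / t^2 :=
    intervalIntegral.integral_add (si_integrable' _ _) hint1
  have hinv : (∫ t in (2*π)..x, 1 / t^2) = 1/(2*π) - 1/x := by
    have hd2 : ∀ t ∈ Set.uIcc (2*π) x, HasDerivAt (fun t : ℝ => -t⁻¹) (1 / t^2) t := by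
      intro t ht
      have htpos := hsub t ht
      have := (hasDerivAt_inv htpos.ne').neg
      refine this.congr_deriv ?_
      field_simp
    have hc2 : ContinuousOn (fun t : ℝ => 1 / t^2) (Set.uIcc (2*π) x) := by
      apply ContinuousOn.div continuousOn_const (by fun_prop)
      intro t ht; exact pow_ne_zero 2 (hsub t ht).ne'
    rw [integral_eq_sub_of_hasDerivAt hd2 hc2.intervalIntegrable]
    field_simp
    ring
  have habs : |∫ t in (2*π)..x, Real.cos t / t^2| ≤ 1/(2*π) - 1/x := by
    rw [← hinv]
    calc |∫ t in (2*π)..x, Real.cos t / t^2|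
        ≤ ∫ t in (2*π)..x, |Real.cos t / t^2| :=
          intervalIntegral.abs_integral_le_integral_abs hx
      _ ≤ ∫ t in (2*π)..x, 1 / t^2 := by
          apply integral_mono_on hx hcont1.abs.intervalIntegrable
            (by
              apply ContinuousOn.intervalIntegrable
              apply ContinuousOn.div continuousOn_const (by fun_prop)
              intro t ht; exact pow_ne_zero 2 (hsub t ht).ne')
          intro t ht
          have htpos : (0:ℝ) < t := by linarith [ht.1, pi_pos]
          rw [abs_div, div_le_div_iff₀ (abs_pos.mpr (pow_ne_zero 2 htpos.ne')) (by positivity)]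
          have : |t^2| = t^2 := abs_of_pos (by positivity)
          rw [this]
          nlinarith [abs_cos_le_one t, sq_nonneg t]
  have hxpos : (0:ℝ) < x := by linarith
  have hSi : Si x - Si (2*π) = (∫ t in (2*π)..x, Real.sin t / t) := by
    rw [Si_add' (2*π) x]; ring
  rw [hSi]
  have hJ : (∫ t in (2*π)..x, Real.sin t / t)
      = -Real.cos x / x - (-Real.cos (2*π) / (2*π)) - ∫ t in (2*π)..x, Real.cos t / t^2 := by
    rw [← key, hsplit]; ring
  rw [hJ, Real.cos_two_pi]
  have hcx : |Real.cos x| ≤ 1 := abs_cos_le_one x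
  have h1 : |(-Real.cos x / x)| ≤ 1/x := by
    rw [abs_div, abs_neg, abs_of_pos hxpos]
    gcongr
  obtain ⟨hA1, hA2⟩ := abs_le.mp h1
  obtain ⟨hI1, hI2⟩ := abs_le.mp habs
  have hpp : 1/(2*π) + 1/(2*π) = 1/π := by
    rw [← add_div]
    rw [div_eq_div_iff (by positivity) pi_pos.ne']
    ring
  have hneg : -1/(2*π) = -(1/(2*π)) := by ring
  rw [abs_le]
  constructor <;> linarith

lemma numeric_facts :
    π - π^3/18 + π^5/600 ≤ 1.93 ∧ (1.41:ℝ) ≤ π - π^3/18 ∧ 1/π ≤ 0.34 := by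
  have hp : (3.141592:ℝ) < π := Real.pi_gt_d6
  have hp' : π < 3.141593 := Real.pi_lt_d6
  have hc1 : π^3 ≤ (3.141593:ℝ)^3 := pow_le_pow_left₀ pi_pos.le hp'.le 3
  have hc2 : (3.141592:ℝ)^3 ≤ π^3 := pow_le_pow_left₀ (by norm_num) hp.le 3
  have hc5 : π^5 ≤ (3.141593:ℝ)^5 := pow_le_pow_left₀ pi_pos.le hp'.le 5
  refine ⟨?_, ?_, ?_⟩
  · nlinarith
  · nlinarith
  · rw [div_le_iff₀ pi_pos]; nlinarith

/-- **Uniform bound on the sine integral:** for every `x ≥ 0`, `0 ≤ Si(x) < 2`. -/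
theorem sine_integral_bounds (x : ℝ) (hx : 0 ≤ x) : 0 ≤ Si x ∧ Si x < 2 := by
  obtain ⟨hUnum, hLnum, hpinum⟩ := numeric_facts
  have hU := Si_pi_le'
  have hL := Si_pi_ge'
  have hinv2 : 2/π = 2*(1/π) := by ring
  rcases le_total x π with h1 | h1
  · constructor
    · apply integral_nonneg hx
      intro u hu
      exact div_nonneg (Real.sin_nonneg_of_nonneg_of_le_pi hu.1 (hu.2.trans h1)) hu.1
    · have hadd : Si π = Si x + ∫ t in x..π, Real.sin t / t := Si_add' x π
      have hpos : 0 ≤ ∫ t in x..π, Real.sin t / t := by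
        apply integral_nonneg h1
        intro u hu
        exact div_nonneg (Real.sin_nonneg_of_nonneg_of_le_pi (hx.trans hu.1) hu.2)
          (hx.trans hu.1)
      linarith
  · have hnp : ∀ a b : ℝ, π ≤ a → b ≤ 2*π → a ≤ b →
        (∫ t in a..b, Real.sin t / t) ≤ 0 := by
      intro a b ha hb hab
      have := integral_mono_on (μ := volume) (f := fun t => Real.sin t / t)
        (g := fun _ => (0:ℝ)) hab (si_integrable' a b) intervalIntegrable_const ?_
      · simpa using this
      · intro u hu
        have hs := sin_nonpos_on_pi_two_pi (ha.trans hu.1) (hu.2.trans hb)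
        exact div_nonpos_of_nonpos_of_nonneg hs (le_trans pi_pos.le (ha.trans hu.1))
    rcases le_total x (2*π) with h2 | h2
    · have hadd : Si x = Si π + ∫ t in π..x, Real.sin t / t := Si_add' π x
      have hsplit : (∫ t in π..x, Real.sin t / t) + (∫ t in x..(2*π), Real.sin t / t)
          = ∫ t in π..(2*π), Real.sin t / t :=
        intervalIntegral.integral_add_adjacent_intervals (si_integrable' π x)
          (si_integrable' x (2*π))
      have hnp1 := hnp π x le_rfl h2 h1
      have hnp2 := hnp x (2*π) h1 le_rfl h2
      have hseg := seg_ge'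
      constructor
      · linarith
      · linarith
    · have ht := abs_le.mp (tail_bound' h2)
      have hadd : Si (2*π) = Si π + ∫ t in π..(2*π), Real.sin t / t := Si_add' π (2*π)
      have hs1 := seg_le'
      have hs2 := seg_ge'
      constructor
      · linarith
      · linarith

end
end
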